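/- Let G be a bipartite simple graph on n vertices with m edges. If k ≥ √(32n), then BC_k(G) holds; moreover, if m ≥ √32 · n^{3/2}, then BC_k(G) holds for every k with 1 ≤ k ≤ n. -/

import Mathlib

open Finset

namespace Brouwer

variable {V : Type*}

/-- The sum of the `k` largest values of `f` on a finite type, expressed as the
supremum over all `k`-element subsets of the sum of `f` over the subset. -/
noncomputable def sumKLargest [Fintype V] (f : V → ℝ) (k : ℕ) : ℝ :=
  sSup { x : ℝ | ∃ T : Finset V, T.card = k ∧ ∑ i ∈ T, f i = x }

/-- The Laplacian matrix of a finite simple graph is Hermitian (real symmetric). -/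
theorem lapMatrix_isHermitian [Fintype V] [DecidableEq V] (G : SimpleGraph V)
    [DecidableRel G.Adj] : (G.lapMatrix ℝ).IsHermitian := by
  rw [Matrix.IsHermitian, Matrix.conjTranspose_eq_transpose_of_trivial]
  exact G.isSymm_lapMatrix ℝ

/-- The adjacency matrix of a finite simple graph is Hermitian (real symmetric). -/
theorem adjMatrix_isHermitian [Fintype V] [DecidableEq V] (G : SimpleGraph V)
    [DecidableRel G.Adj] : (G.adjMatrix ℝ).IsHermitian := by
  rw [Matrix.IsHermitian, Matrix.conjTranspose_eq_transpose_of_trivial]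
  exact G.isSymm_adjMatrix

/-- The (multiset of) eigenvalues of the Laplacian matrix of `G`, indexed by vertices. -/
noncomputable def lapEig [Fintype V] [DecidableEq V] (G : SimpleGraph V) : V → ℝ := by
  classical exact (lapMatrix_isHermitian G).eigenvalues

/-- The (multiset of) eigenvalues of the adjacency matrix of `G`, indexed by vertices. -/
noncomputable def adjEig [Fintype V] [DecidableEq V] (G : SimpleGraph V) : V → ℝ := by
  classical exact (adjMatrix_isHermitian G).eigenvalues

/-- `sLap G k` is `s_k(G)`, the sum of the `k` largest Laplacian eigenvalues of `G`. -/
noncomputable def sLap [Fintype V] [DecidableEq V] (G : SimpleGraph V) (k : ℕ) : ℝ :=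
  sumKLargest (lapEig G) k

/-- The number of edges of `G`. -/
noncomputable def numEdges [Fintype V] (G : SimpleGraph V) : ℕ := by
  classical exact G.edgeFinset.card

/-- `BC G k`: Brouwer's conjectured inequality `s_k(G) ≤ m + (k+1 choose 2)`. -/
def BC [Fintype V] [DecidableEq V] (G : SimpleGraph V) (k : ℕ) : Prop :=
  sLap G k ≤ numEdges G + (k + 1).choose 2

/-- Number of edges of `G` with both endpoints in `S`. -/
noncomputable def edgesWithin [Fintype V] [DecidableEq V] (G : SimpleGraph V)
    (S : Finset V) : ℕ := by
  classical exact (G.edgeFinset.filter (fun e => ∀ v ∈ e, v ∈ S)).card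

/-- The adjacency spectral radius of `G`, i.e. the largest adjacency eigenvalue. -/
noncomputable def specRad [Fintype V] [DecidableEq V] (G : SimpleGraph V) : ℝ :=
  sumKLargest (adjEig G) 1

/-- The maximum subgraph spectral density `t(G)`:
the supremum of `ρ(G[S])/|S|` over nonempty vertex subsets `S`. -/
noncomputable def maxDensity [Fintype V] [DecidableEq V] (G : SimpleGraph V) : ℝ :=
  sSup { x : ℝ | ∃ S : Finset V, S.Nonempty ∧
    x = specRad (G.induce (↑S : Set V)) / (S.card : ℝ) }

/-- Edge-edit distance between two graphs on the same vertex set. -/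
noncomputable def editDistance [Fintype V] (G H : SimpleGraph V) : ℕ := by
  classical exact (symmDiff G.edgeFinset H.edgeFinset).card

/-- A split graph: the vertex set partitions into a clique and an independent set. -/
def IsSplit (G : SimpleGraph V) : Prop :=
  ∃ C : Set V, G.IsClique C ∧ Gᶜ.IsClique Cᶜ

/-- The splittance of `G`: the least number of edge edits needed to reach a split graph. -/
noncomputable def splittance [Fintype V] (G : SimpleGraph V) : ℕ :=
  sInf { d : ℕ | ∃ H : SimpleGraph V, IsSplit H ∧ editDistance G H = d }

/-- The join `G + K₁` of `G` with one new vertex adjacent to every vertex of `G`. -/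
def joinOne (G : SimpleGraph V) : SimpleGraph (Option V) where
  Adj x y := x ≠ y ∧ ∀ a, x = some a → ∀ b, y = some b → G.Adj a b
  symm := by
    constructor
    rintro x y ⟨hxy, h⟩
    exact ⟨hxy.symm, fun a ha b hb => (h b hb a ha).symm⟩
  loopless := by constructor; rintro x ⟨hxx, -⟩; exact hxx rfl

/-!
Let `x_i` be orthonormal Laplacian eigenvectors, `T` a set of `k` indices and
`p v = ∑_{i ∈ T} x_i(v)²`, so that `0 ≤ p ≤ 1` and `∑ p = k`. Writing `L = D - A`,
`∑_{i ∈ T} λ_i = ∑_v d_v p_v - ∑_{i ∈ T} x_iᵀ A x_i`. Since `(1 - p_v)(1 - p_w) ≥ 0`, the first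
term is at most `m + pᵀAp / 2`, and `pᵀAp ≤ k² / 2` for bipartite `G`. By Cauchy–Schwarz and
Parseval the second is at most `√(k · tr A²) = √(2km)`. Hence `s_k ≤ m + k²/4 + √(2km)`,
which is at most `m + k²/2` once `32 m ≤ k³`. Otherwise `k² ≥ 32 n` forces `m > k n ≥ s_k`,
as every Laplacian eigenvalue is at most `n`; the same bound `s_k ≤ k n` gives the second
claim when `k < √(32 n)`.
-/

open Matrix

section OrthonormalBasis

variable {n ι : Type*} [Fintype n] [Fintype ι] (b : OrthonormalBasis ι ℝ (EuclideanSpace ℝ n))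

lemma sum_coord_sq_eq_one (i : ι) : ∑ v, b i v ^ 2 = 1 := by
  rw [← EuclideanSpace.real_norm_sq_eq, b.orthonormal.1 i, one_pow]

lemma sum_basis_sq_eq_one [DecidableEq n] (v : n) : ∑ i, b i v ^ 2 = 1 := by
  simpa [EuclideanSpace.inner_single_right] using b.sum_sq_inner_right (EuclideanSpace.single v 1)

lemma sum_sq_mulVec_basis (A : Matrix n n ℝ) :
    ∑ i, ∑ v, (A *ᵥ ⇑(b i)) v ^ 2 = ∑ v, ∑ w, A v w ^ 2 := by
  rw [Finset.sum_comm]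
  refine Finset.sum_congr rfl fun v _ => ?_
  have parseval := b.sum_sq_inner_right (WithLp.toLp 2 (A v))
  rw [EuclideanSpace.real_norm_sq_eq] at parseval
  simpa [EuclideanSpace.inner_eq_star_dotProduct, Matrix.mulVec, dotProduct_comm] using parseval

lemma sq_dotProduct_mulVec_basis_le (A : Matrix n n ℝ) (i : ι) :
    (⇑(b i) ⬝ᵥ A *ᵥ ⇑(b i)) ^ 2 ≤ ∑ v, (A *ᵥ ⇑(b i)) v ^ 2 :=
  calc (⇑(b i) ⬝ᵥ A *ᵥ ⇑(b i)) ^ 2 ≤ (∑ v, b i v ^ 2) * ∑ v, (A *ᵥ ⇑(b i)) v ^ 2 :=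
        Finset.sum_mul_sq_le_sq_mul_sq _ _ _
    _ = ∑ v, (A *ᵥ ⇑(b i)) v ^ 2 := by rw [sum_coord_sq_eq_one, one_mul]

lemma sum_abs_dotProduct_mulVec_basis_le (A : Matrix n n ℝ) (T : Finset ι) :
    ∑ i ∈ T, |⇑(b i) ⬝ᵥ A *ᵥ ⇑(b i)| ≤ √(#T * ∑ v, ∑ w, A v w ^ 2) := by
  apply Real.le_sqrt_of_sq_le
  calc (∑ i ∈ T, |⇑(b i) ⬝ᵥ A *ᵥ ⇑(b i)|) ^ 2
      ≤ #T * ∑ i ∈ T, |⇑(b i) ⬝ᵥ A *ᵥ ⇑(b i)| ^ 2 := sq_sum_le_card_mul_sum_sq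
    _ ≤ #T * ∑ i, ∑ v, (A *ᵥ ⇑(b i)) v ^ 2 := by
        gcongr
        refine Finset.sum_le_sum_of_subset_of_nonneg T.subset_univ (fun i _ _ => by positivity)
          |>.trans' (Finset.sum_le_sum fun i _ => ?_)
        rw [sq_abs]
        exact sq_dotProduct_mulVec_basis_le b A i
    _ = #T * ∑ v, ∑ w, A v w ^ 2 := by rw [sum_sq_mulVec_basis]

end OrthonormalBasis

lemma eigenvalues_eq_dotProduct {n : Type*} [Fintype n] [DecidableEq n] {M : Matrix n n ℝ}
    (hM : M.IsHermitian) (i : n) :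
    hM.eigenvalues i = ⇑(hM.eigenvectorBasis i) ⬝ᵥ M *ᵥ ⇑(hM.eigenvectorBasis i) := by
  simpa [dotProduct_comm] using hM.eigenvalues_eq i

section Graph

variable [Fintype V] (G : SimpleGraph V) [DecidableRel G.Adj]

lemma sum_sq_adjMatrix : ∑ v, ∑ w, G.adjMatrix ℝ v w ^ 2 = 2 * #G.edgeFinset := by
  have diag (v : V) : ∑ w, G.adjMatrix ℝ v w ^ 2 = G.degree v := by
    rw [← G.adjMatrix_mul_self_apply_self, Matrix.mul_apply]
    exact Finset.sum_congr rfl fun w _ => by rw [sq, G.isSymm_adjMatrix.apply v w]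
  simp_rw [diag]
  exact_mod_cast G.sum_degrees_eq_twice_card_edges

lemma dotProduct_mulVec_lapMatrix [DecidableEq V] (x : V → ℝ) :
    x ⬝ᵥ G.lapMatrix ℝ *ᵥ x =
      ∑ v, G.degree v * x v ^ 2 - x ⬝ᵥ G.adjMatrix ℝ *ᵥ x := by
  simp_rw [SimpleGraph.lapMatrix, Matrix.sub_mulVec, dotProduct_sub,
    SimpleGraph.dotProduct_mulVec_degMatrix, mul_assoc, sq]

lemma dotProduct_mulVec_lapMatrix_le [DecidableEq V] (x : V → ℝ) :
    x ⬝ᵥ G.lapMatrix ℝ *ᵥ x ≤ Fintype.card V * ∑ v, x v ^ 2 := by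
  have all_pairs : ∑ a, ∑ b, (x a - x b) ^ 2 =
      2 * Fintype.card V * ∑ v, x v ^ 2 - 2 * (∑ v, x v) ^ 2 := by
    simp only [sub_sq, Finset.sum_add_distrib, Finset.sum_sub_distrib, Finset.sum_const,
      Finset.card_univ, nsmul_eq_mul, ← Finset.mul_sum, ← Finset.sum_mul]
    ring
  have adj_pairs : ∑ a, ∑ b, (if G.Adj a b then (x a - x b) ^ 2 else 0) ≤
      ∑ a, ∑ b, (x a - x b) ^ 2 := by
    gcongr with a _ b _
    split_ifs
    exacts [le_rfl, sq_nonneg _]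
  rw [← Matrix.toLinearMap₂'_apply', SimpleGraph.lapMatrix_toLinearMap₂']
  nlinarith [sq_nonneg (∑ v, x v)]

lemma sum_degree_mul_le {p : V → ℝ} (hp : ∀ v, p v ≤ 1) :
    ∑ v, G.degree v * p v ≤ #G.edgeFinset + (p ⬝ᵥ G.adjMatrix ℝ *ᵥ p) / 2 := by
  have swap : ∑ v, ∑ w, (if G.Adj v w then p v else 0) =
      ∑ v, ∑ w, (if G.Adj v w then p w else 0) := by
    rw [Finset.sum_comm]
    simp_rw [G.adj_comm]
  have twice : 2 * ∑ v, G.degree v * p v =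
      ∑ v, ∑ w, (if G.Adj v w then p v + p w else 0) := by
    simp_rw [G.degree_eq_sum_if_adj, Finset.sum_mul, ite_mul, one_mul, zero_mul]
    rw [two_mul]
    nth_rw 2 [swap]
    simp_rw [← Finset.sum_add_distrib, ite_add_ite, add_zero]
  have edges : ∑ v, ∑ w, (if G.Adj v w then (1 : ℝ) else 0) = 2 * #G.edgeFinset := by
    simp_rw [← G.degree_eq_sum_if_adj]
    exact_mod_cast G.sum_degrees_eq_twice_card_edges
  have pairwise : ∑ v, ∑ w, (if G.Adj v w then p v + p w else 0) ≤
      ∑ v, ∑ w, (if G.Adj v w then 1 + p v * p w else 0) := by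
    gcongr with v _ w _
    split_ifs
    · nlinarith [mul_nonneg (sub_nonneg.2 (hp v)) (sub_nonneg.2 (hp w))]
    · rfl
  rw [← twice] at pairwise
  simp_rw [ite_add_zero, Finset.sum_add_distrib, edges, ← G.dotProduct_mulVec_adjMatrix]
    at pairwise
  linarith

lemma dotProduct_mulVec_adjMatrix_le_of_colorable_two (hG : G.Colorable 2) {p : V → ℝ}
    (hp : ∀ v, 0 ≤ p v) : p ⬝ᵥ G.adjMatrix ℝ *ᵥ p ≤ (∑ v, p v) ^ 2 / 2 := by
  obtain ⟨c⟩ := hG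
  set s : V → ℝ := fun v => ![1, -1] (c v)
  have sign_mul (v w : V) : s v * s w = if c v = c w then 1 else -1 := by
    simp only [s]
    generalize c v = a, c w = b
    fin_cases a <;> fin_cases b <;> norm_num
  have pointwise (v w : V) :
      (if G.Adj v w then p v * p w else 0) ≤ (1 - s v * s w) / 2 * (p v * p w) := by
    have := mul_nonneg (hp v) (hp w)
    rw [sign_mul]
    split_ifs with hadj hc
    · exact absurd hc (c.valid hadj)
    all_goals linarith
  calc p ⬝ᵥ G.adjMatrix ℝ *ᵥ p = ∑ v, ∑ w, (if G.Adj v w then p v * p w else 0) :=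
        G.dotProduct_mulVec_adjMatrix p p
    _ ≤ ∑ v, ∑ w, (1 - s v * s w) / 2 * (p v * p w) := by
        gcongr with v _ w _
        exact pointwise v w
    _ = ((∑ v, p v) ^ 2 - (∑ v, s v * p v) ^ 2) / 2 := by
        simp only [sq, Finset.sum_mul_sum, ← Finset.sum_sub_distrib, Finset.sum_div]
        congr! 2
        ring
    _ ≤ (∑ v, p v) ^ 2 / 2 := by nlinarith [sq_nonneg (∑ v, s v * p v)]

variable [DecidableEq V]

lemma eigenvalues_lapMatrix_le_card (i : V) :
    (lapMatrix_isHermitian G).eigenvalues i ≤ Fintype.card V := by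
  simpa [sum_coord_sq_eq_one] using
    (eigenvalues_eq_dotProduct _ i).trans_le (dotProduct_mulVec_lapMatrix_le G _)

lemma sum_eigenvalues_lapMatrix_le_of_colorable_two (hG : G.Colorable 2) (T : Finset V) :
    ∑ i ∈ T, (lapMatrix_isHermitian G).eigenvalues i ≤
      #G.edgeFinset + (#T : ℝ) ^ 2 / 4 + √(2 * #T * #G.edgeFinset) := by
  set x := (lapMatrix_isHermitian G).eigenvectorBasis
  set p : V → ℝ := fun v => ∑ i ∈ T, x i v ^ 2
  have hp0 (v : V) : 0 ≤ p v := Finset.sum_nonneg fun i _ => sq_nonneg _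
  have hp1 (v : V) : p v ≤ 1 :=
    (Finset.sum_le_sum_of_subset_of_nonneg T.subset_univ fun i _ _ => sq_nonneg _).trans_eq
      (sum_basis_sq_eq_one x v)
  have hp_sum : ∑ v, p v = #T := by
    simp only [p]
    rw [Finset.sum_comm]
    simp [sum_coord_sq_eq_one]
  have split : ∑ i ∈ T, (lapMatrix_isHermitian G).eigenvalues i =
      ∑ v, G.degree v * p v - ∑ i ∈ T, ⇑(x i) ⬝ᵥ G.adjMatrix ℝ *ᵥ ⇑(x i) := by
    simp_rw [eigenvalues_eq_dotProduct, dotProduct_mulVec_lapMatrix, Finset.sum_sub_distrib,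
      p, Finset.mul_sum]
    rw [Finset.sum_comm]
  have adjacency :
      -∑ i ∈ T, ⇑(x i) ⬝ᵥ G.adjMatrix ℝ *ᵥ ⇑(x i) ≤ √(2 * #T * #G.edgeFinset) :=
    calc -∑ i ∈ T, ⇑(x i) ⬝ᵥ G.adjMatrix ℝ *ᵥ ⇑(x i)
        ≤ ∑ i ∈ T, |⇑(x i) ⬝ᵥ G.adjMatrix ℝ *ᵥ ⇑(x i)| := by
          rw [← Finset.sum_neg_distrib]
          exact Finset.sum_le_sum fun i _ => neg_le_abs _
      _ ≤ √(#T * ∑ v, ∑ w, G.adjMatrix ℝ v w ^ 2) :=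
          sum_abs_dotProduct_mulVec_basis_le x _ T
      _ = √(2 * #T * #G.edgeFinset) := by rw [sum_sq_adjMatrix]; ring_nf
  have degree := sum_degree_mul_le G hp1
  have bipartite := dotProduct_mulVec_adjMatrix_le_of_colorable_two G hG hp0
  rw [hp_sum] at bipartite
  linarith

end Graph

lemma sumKLargest_le [Fintype V] {f : V → ℝ} {k : ℕ} {C : ℝ}
    (h : ∀ T : Finset V, #T = k → ∑ i ∈ T, f i ≤ C) (hC : 0 ≤ C) :
    sumKLargest f k ≤ C :=
  Real.sSup_le (by rintro _ ⟨T, hT, rfl⟩; exact h T hT) hC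

section BC

variable [Fintype V] (G : SimpleGraph V)

lemma numEdges_eq_card_edgeFinset [Fintype G.edgeSet] : numEdges G = #G.edgeFinset := by
  unfold numEdges
  congr!

variable [DecidableEq V]

lemma lapEig_eq_eigenvalues [DecidableRel G.Adj] :
    lapEig G = (lapMatrix_isHermitian G).eigenvalues := by
  unfold lapEig
  congr!

lemma bc_of_forall_sum_le {k : ℕ}
    (h : ∀ T : Finset V, #T = k → ∑ i ∈ T, lapEig G i ≤ numEdges G + (k + 1).choose 2) :
    BC G k :=
  sumKLargest_le h (by positivity)

lemma bc_of_mul_card_le {k : ℕ} (h : (k : ℝ) * Fintype.card V ≤ numEdges G) : BC G k := by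
  classical
  refine bc_of_forall_sum_le G fun T hT => ?_
  calc ∑ i ∈ T, lapEig G i ≤ ∑ _i ∈ T, (Fintype.card V : ℝ) := by
        rw [lapEig_eq_eigenvalues]
        exact Finset.sum_le_sum fun i _ => eigenvalues_lapMatrix_le_card G i
    _ = k * Fintype.card V := by simp [hT]
    _ ≤ numEdges G + (k + 1).choose 2 := le_add_of_le_of_nonneg h (by positivity)

lemma bc_of_colorable_two (hG : G.Colorable 2) {k : ℕ} (h : 32 * (numEdges G : ℝ) ≤ k ^ 3) :
    BC G k := by
  classical
  refine bc_of_forall_sum_le G fun T hT => ?_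
  have spectral := sum_eigenvalues_lapMatrix_le_of_colorable_two G hG T
  rw [← lapEig_eq_eigenvalues, ← numEdges_eq_card_edgeFinset, hT] at spectral
  have sqrt_le : √(2 * k * numEdges G) ≤ (k : ℝ) ^ 2 / 4 := by
    rw [Real.sqrt_le_left (by positivity)]
    nlinarith [Nat.cast_nonneg (α := ℝ) k]
  have choose_ge : (k : ℝ) ^ 2 / 2 ≤ (k + 1).choose 2 := by
    rw [Nat.cast_choose_two]
    push_cast
    nlinarith [Nat.cast_nonneg (α := ℝ) k]
  linarith

end BC

/-- for bipartite `G`, `BC_k(G)` holds whenever `k ≥ √(32n)`; moreover if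
`m ≥ √32 · n^{3/2}` then `BC_k(G)` holds for every `1 ≤ k ≤ n`. -/
theorem bc_bipartite {V : Type*} [Fintype V] [DecidableEq V] (G : SimpleGraph V)
    (hbip : G.Colorable 2) :
    (∀ k : ℕ, 1 ≤ k → k ≤ Fintype.card V →
      Real.sqrt (32 * Fintype.card V) ≤ (k : ℝ) → BC G k) ∧
    (Real.sqrt 32 * (Fintype.card V : ℝ) ^ ((3 : ℝ) / 2) ≤ (numEdges G : ℝ) →
      ∀ k : ℕ, 1 ≤ k → k ≤ Fintype.card V → BC G k) := by
  set n : ℝ := (Fintype.card V : ℝ)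
  have large_k (k : ℕ) (hk : √(32 * n) ≤ k) : BC G k := by
    have hn : 32 * n ≤ (k : ℝ) ^ 2 := (Real.sqrt_le_left (by positivity)).1 hk
    by_cases hm : (k : ℝ) * n ≤ numEdges G
    · exact bc_of_mul_card_le G hm
    · exact bc_of_colorable_two G hbip (by nlinarith [Nat.cast_nonneg (α := ℝ) k])
  refine ⟨fun k _ _ hk => large_k k hk, fun hm k _ _ => ?_⟩
  by_cases hk : √(32 * n) ≤ k
  · exact large_k k hk
  have rpow_eq : n ^ ((3 : ℝ) / 2) = √n * n := by
    rw [show (3 : ℝ) / 2 = 1 / 2 + 1 by norm_num, Real.rpow_add' (by positivity) (by norm_num),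
      Real.rpow_one, Real.sqrt_eq_rpow]
  refine bc_of_mul_card_le G ?_
  calc (k : ℝ) * n ≤ √(32 * n) * n := by gcongr; exact (not_le.1 hk).le
    _ = √32 * n ^ ((3 : ℝ) / 2) := by rw [rpow_eq, Real.sqrt_mul (by norm_num), mul_assoc]
    _ ≤ numEdges G := hm

end Brouwer
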